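/- Every d-dimensional pseudomanifold (d ≥ 1) with exactly d + 3 vertices is isomorphic to the join S^c_{c+2} * S^{d-c-1}_{d-c+1} of two standard spheres for some c with 0 ≤ c < d; in particular, it is a polytopal sphere. -/

import Mathlib

/-!
Let `V` be the `d + 3` vertices. A facet misses exactly two of them, so the facets are the sets
`V \ {x, y}` for the edges `xy` of a graph on `V`. If `V \ {x, y}` is a facet and `z` is a third
vertex, the ridge `V \ {x, y, z}` lies in exactly two facets, one of them `V \ {x, y}`; so `z` is
adjacent to exactly one of `x`, `y`. This forces the graph to be complete bipartite with parts `A`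
and `B`, and the faces are the subsets of `V` containing neither `A` nor `B`: the complex is
`∂Δ(A) * ∂Δ(B)`.

For the realization, write `ℝ^{d+1} = ℝ^I ⊕ ℝ^{Iᶜ}` and place `A` and `B` as simplices with
barycentre `0` in the two summands. A function on `A ∪ B` is the restriction of a linear
functional as soon as it sums to zero on `A` and on `B`; this yields a supporting functional for
every face of the join, and conversely `∑ A = ∑ B = 0` shows that no exposed face of
`conv (A ∪ B)` contains all of `A` or all of `B`.
-/

open Geometry

namespace MinTri

/-- The ambient Euclidean space `ℝ^N`. -/
abbrev Spc (N : ℕ) : Type := Fin N → ℝ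

variable {m n N : ℕ}

/-- `fcount K i` is the number `f_i(K)` of `i`-dimensional simplices of `K`. -/
noncomputable def fcount (K : SimplicialComplex ℝ (Spc N)) (i : ℕ) : ℕ :=
  {s ∈ K.faces | s.card = i + 1}.ncard

/-- The Euler characteristic `χ(K) = ∑_{i=0}^{d} (-1)^i f_i(K)` of a `d`-dimensional complex. -/
noncomputable def eulerChar (K : SimplicialComplex ℝ (Spc N)) (d : ℕ) : ℤ :=
  ∑ i ∈ Finset.range (d + 1), (-1 : ℤ) ^ i * fcount K i

/-- `f_{i-1}(K)` with the convention `f_{-1} = 1` (so `fcount' K 0 = 1`). -/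
noncomputable def fcount' (K : SimplicialComplex ℝ (Spc N)) (i : ℕ) : ℤ :=
  if i = 0 then 1 else (fcount K (i - 1) : ℤ)

/-- The `h`-vector: `h_j(K) = ∑_{i=-1}^{j-1} (-1)^{j-i-1} C(d-i, j-i-1) f_i(K)`,
reindexed as a sum over `i` from `0` to `j` with `fcount'` (where `fcount' K i = f_{i-1}(K)`). -/
noncomputable def hvec (K : SimplicialComplex ℝ (Spc N)) (d j : ℕ) : ℤ :=
  ∑ i ∈ Finset.range (j + 1),
    (-1 : ℤ) ^ (j - i) * ((d + 1 - i).choose (j - i) : ℤ) * fcount' K i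

/-- An isomorphism between two simplicial complexes: an injection on vertices carrying the
faces of one complex exactly onto the faces of the other. -/
def IsIso (K : SimplicialComplex ℝ (Spc m)) (L : SimplicialComplex ℝ (Spc n)) : Prop :=
  ∃ f : Spc m → Spc n, Set.InjOn f K.vertices ∧
    (∀ s ∈ K.faces, s.image f ∈ L.faces) ∧
    (∀ t ∈ L.faces, ∃ s ∈ K.faces, s.image f = t)

/-- `L` is a subdivision of `K`: same underlying polyhedron and every simplex of `L` is
contained in a simplex of `K`. -/
def IsSubdivisionOf (L K : SimplicialComplex ℝ (Spc N)) : Prop :=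
  L.space = K.space ∧
    ∀ s ∈ L.faces, ∃ t ∈ K.faces,
      convexHull ℝ (s : Set (Spc N)) ⊆ convexHull ℝ (t : Set (Spc N))

/-- Two complexes are combinatorially equivalent if they have isomorphic subdivisions. -/
def CombEquiv (K : SimplicialComplex ℝ (Spc m)) (L : SimplicialComplex ℝ (Spc n)) : Prop :=
  ∃ (K' : SimplicialComplex ℝ (Spc m)) (L' : SimplicialComplex ℝ (Spc n)),
    IsSubdivisionOf K' K ∧ IsSubdivisionOf L' L ∧ IsIso K' L'

/-- `K` is the boundary complex of a geometric `(d+1)`-simplex: its faces are exactly the proper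
nonempty subsets of a set `s` of `d+2` affinely independent points (the standard `d`-sphere). -/
def IsStandardSphere (d : ℕ) (K : SimplicialComplex ℝ (Spc N)) : Prop :=
  ∃ s : Finset (Spc N), s.card = d + 2 ∧
    AffineIndependent ℝ ((↑) : s → Spc N) ∧
    K.faces = {t | t ⊆ s ∧ t ≠ ∅ ∧ t ≠ s}

/-- A combinatorial `d`-sphere: a complex combinatorially equivalent to the boundary complex of
the `(d+1)`-simplex. -/
def IsCombSphere (d : ℕ) (K : SimplicialComplex ℝ (Spc N)) : Prop :=
  ∃ L : SimplicialComplex ℝ (Spc (d + 2)), IsStandardSphere d L ∧ CombEquiv K L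

/-- The link of a simplex `σ` in `K`: all faces disjoint from `σ` whose union with `σ`
is again a face. -/
noncomputable def linkOf (K : SimplicialComplex ℝ (Spc N)) (σ : Finset (Spc N)) :
    SimplicialComplex ℝ (Spc N) where
  faces := {s | s ∈ K.faces ∧ Disjoint s σ ∧ s ∪ σ ∈ K.faces}
  isRelLowerSet_faces := by
    intro s hs
    refine ⟨K.nonempty_of_mem_faces hs.1, fun t hts ht => ?_⟩
    exact ⟨K.down_closed hs.1 hts ht, Finset.disjoint_of_subset_left hts hs.2.1,
      K.down_closed hs.2.2 (Finset.union_subset_union_left hts)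
        (Finset.Nonempty.mono Finset.subset_union_left ht)⟩
  indep h := K.indep h.1
  inter_subset_convexHull hs ht := K.inter_subset_convexHull hs.1 ht.1

/-- The link of a vertex. -/
noncomputable def link (K : SimplicialComplex ℝ (Spc N)) (v : Spc N) :
    SimplicialComplex ℝ (Spc N) :=
  linkOf K {v}

/-- A combinatorial `d`-manifold: a nonempty finite simplicial complex in which the link of
every vertex is a combinatorial `(d-1)`-sphere. -/
def IsCombManifold (d : ℕ) (K : SimplicialComplex ℝ (Spc N)) : Prop :=
  K.faces.Finite ∧ K.faces.Nonempty ∧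
    ∀ v ∈ K.vertices, IsCombSphere (d - 1) (link K v)

/-- `K` is pure of dimension `d`: every face has at most `d+1` vertices and is contained in a
face with exactly `d+1` vertices. -/
def IsPure (d : ℕ) (K : SimplicialComplex ℝ (Spc N)) : Prop :=
  (∀ s ∈ K.faces, s.card ≤ d + 1) ∧
    ∀ s ∈ K.faces, ∃ t ∈ K.faces, t.card = d + 1 ∧ s ⊆ t

/-- A `d`-pseudomanifold: a nonempty pure `d`-dimensional complex in which every `(d-1)`-simplex
lies in exactly two facets, and any two facets are connected by a chain of facets, consecutive
ones meeting in a `(d-1)`-simplex. -/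
def IsPseudomanifold (d : ℕ) (K : SimplicialComplex ℝ (Spc N)) : Prop :=
  K.faces.Nonempty ∧ IsPure d K ∧
    (∀ s ∈ K.faces, s.card = d →
      {t | t ∈ K.faces ∧ t.card = d + 1 ∧ s ⊆ t}.ncard = 2) ∧
    ∀ s ∈ K.faces, ∀ t ∈ K.faces, s.card = d + 1 → t.card = d + 1 →
      ∃ (k : ℕ) (c : Fin (k + 1) → Finset (Spc N)), c 0 = s ∧ c (Fin.last k) = t ∧
        (∀ i, c i ∈ K.faces ∧ (c i).card = d + 1) ∧
        ∀ i : Fin k, (c i.castSucc ∩ c i.succ).card = d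

/-- Connectedness of a complex: any two vertices are joined by a path of edges. -/
def ComplexConnected (K : SimplicialComplex ℝ (Spc N)) : Prop :=
  ∀ u ∈ K.vertices, ∀ w ∈ K.vertices,
    ∃ (k : ℕ) (p : Fin (k + 1) → Spc N), p 0 = u ∧ p (Fin.last k) = w ∧
      ∀ i : Fin k, ({p i.castSucc, p i.succ} : Finset (Spc N)) ∈ K.faces

/-- A normal `d`-pseudomanifold: a `d`-pseudomanifold in which the link of every simplex of
dimension at most `d - 2` is connected. -/
def IsNormalPseudomanifold (d : ℕ) (K : SimplicialComplex ℝ (Spc N)) : Prop :=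
  IsPseudomanifold d K ∧
    ∀ σ ∈ K.faces, σ.card + 1 ≤ d → ComplexConnected (linkOf K σ)

/-- `K` is `k`-neighbourly: every `k` vertices span a `(k-1)`-face. -/
def IsNeighbourly (k : ℕ) (K : SimplicialComplex ℝ (Spc N)) : Prop :=
  ∀ s : Finset (Spc N), (s : Set (Spc N)) ⊆ K.vertices → s.card = k → s ∈ K.faces

/-- `K'` is obtained from `K` by starring the vertex `a` in the facet `σ`:
`a` is an interior point of `σ` and the facet `σ` is replaced by the cones from `a`
over the proper faces of `σ`. -/
def IsStarredFacet (K K' : SimplicialComplex ℝ (Spc N)) (σ : Finset (Spc N)) (a : Spc N) :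
    Prop :=
  σ ∈ K.facets ∧ a ∈ convexHull ℝ (σ : Set (Spc N)) ∧
    (∀ τ : Finset (Spc N), τ ⊂ σ → a ∉ convexHull ℝ (τ : Set (Spc N))) ∧
    K'.faces = (K.faces \ {σ}) ∪
      {s | ∃ τ : Finset (Spc N), τ ⊆ σ ∧ τ ≠ σ ∧ s = insert a τ}

/-- A geometric witness that a complex is a stacked `d`-sphere: a chain of complexes starting at
the boundary complex of a `(d+1)`-simplex, each obtained from the previous one by starring a new
vertex in a facet. -/
def IsStackedSphereSeq (d : ℕ) (K : SimplicialComplex ℝ (Spc N)) : Prop :=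
  ∃ (k : ℕ) (c : Fin (k + 1) → SimplicialComplex ℝ (Spc N)),
    IsStandardSphere d (c 0) ∧ c (Fin.last k) = K ∧
    ∀ i : Fin k, ∃ σ a, IsStarredFacet (c i.castSucc) (c i.succ) σ a

/-- A stacked `d`-sphere (up to isomorphism). -/
def IsStackedSphere (d : ℕ) (K : SimplicialComplex ℝ (Spc m)) : Prop :=
  ∃ (N : ℕ) (L : SimplicialComplex ℝ (Spc N)), IsStackedSphereSeq d L ∧ IsIso K L

/-- `L` is the boundary complex of the polytope `conv V`: the faces of `L` are simplices
spanning exactly the proper (exposed) faces of the polytope; in particular the polytope is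
simplicial. -/
def IsBoundaryComplexOfPolytope (L : SimplicialComplex ℝ (Spc N)) (V : Finset (Spc N)) :
    Prop :=
  (∀ s ∈ L.faces, (s : Set (Spc N)) ⊆ (V : Set (Spc N)) ∧
      IsExposed ℝ (convexHull ℝ (V : Set (Spc N))) (convexHull ℝ (s : Set (Spc N))) ∧
      convexHull ℝ (s : Set (Spc N)) ≠ convexHull ℝ (V : Set (Spc N))) ∧
    ∀ F : Set (Spc N), F.Nonempty → IsExposed ℝ (convexHull ℝ (V : Set (Spc N))) F →
      F ≠ convexHull ℝ (V : Set (Spc N)) → ∃ s ∈ L.faces, F = convexHull ℝ (s : Set (Spc N))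

/-- A polytopal `d`-sphere: a complex isomorphic to the boundary complex of a simplicial
`(d+1)`-polytope (a full-dimensional polytope in `ℝ^{d+1}`). -/
def IsPolytopalSphere (d : ℕ) (K : SimplicialComplex ℝ (Spc m)) : Prop :=
  ∃ (V : Finset (Spc (d + 1))) (L : SimplicialComplex ℝ (Spc (d + 1))),
    affineSpan ℝ (V : Set (Spc (d + 1))) = ⊤ ∧
    IsBoundaryComplexOfPolytope L V ∧ IsIso K L

section BoundaryJoin

variable {E : Type*} [DecidableEq E] {s₁ s₂ t : Finset E}

/-- The faces of the join `∂Δ(s₁) * ∂Δ(s₂)` of the boundaries of the simplices on `s₁` and `s₂`. -/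
def boundaryJoinFaces (s₁ s₂ : Finset E) : Set (Finset E) :=
  {t | t ≠ ∅ ∧ ∃ α β : Finset E, α ⊆ s₁ ∧ α ≠ s₁ ∧ β ⊆ s₂ ∧ β ≠ s₂ ∧ t = α ∪ β}

theorem boundaryJoinFaces_comm (s₁ s₂ : Finset E) :
    boundaryJoinFaces s₁ s₂ = boundaryJoinFaces s₂ s₁ := by
  ext t
  constructor <;>
  · rintro ⟨ht, α, β, hα, hα₁, hβ, hβ₂, rfl⟩
    exact ⟨ht, β, α, hβ, hβ₂, hα, hα₁, Finset.union_comm α β⟩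

theorem subset_union_of_mem_boundaryJoinFaces (ht : t ∈ boundaryJoinFaces s₁ s₂) :
    t ⊆ s₁ ∪ s₂ := by
  obtain ⟨-, α, β, hα, -, hβ, -, rfl⟩ := ht
  exact Finset.union_subset_union hα hβ

theorem mem_boundaryJoinFaces_iff (h : Disjoint s₁ s₂) :
    t ∈ boundaryJoinFaces s₁ s₂ ↔ t.Nonempty ∧ t ⊆ s₁ ∪ s₂ ∧ ¬ s₁ ⊆ t ∧ ¬ s₂ ⊆ t := by
  constructor
  · rintro ⟨ht, α, β, hα, hα₁, hβ, hβ₂, rfl⟩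
    refine ⟨Finset.nonempty_iff_ne_empty.2 ht, Finset.union_subset_union hα hβ, fun h₁ => hα₁ ?_,
      fun h₂ => hβ₂ ?_⟩
    · exact hα.antisymm fun x hx => (Finset.mem_union.1 (h₁ hx)).resolve_right
        (Finset.disjoint_left.1 h hx ∘ (hβ ·))
    · exact hβ.antisymm fun x hx => (Finset.mem_union.1 (h₂ hx)).resolve_left
        (Finset.disjoint_right.1 h hx ∘ (hα ·))
  · rintro ⟨ht, hts, h₁, h₂⟩
    refine ⟨ht.ne_empty, t ∩ s₁, t ∩ s₂, Finset.inter_subset_right,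
      fun e => h₁ (e ▸ Finset.inter_subset_left), Finset.inter_subset_right,
      fun e => h₂ (e ▸ Finset.inter_subset_left), ?_⟩
    rw [← Finset.inter_union_distrib_left, Finset.inter_eq_left.2 hts]

theorem two_le_card_of_singleton_mem_boundaryJoinFaces (h : Disjoint s₁ s₂)
    (hsingle : ∀ v ∈ s₁ ∪ s₂, {v} ∈ boundaryJoinFaces s₁ s₂) (hne : (s₁ ∪ s₂).Nonempty) :
    2 ≤ s₁.card ∧ 2 ≤ s₂.card := by
  have key : ∀ v ∈ s₁ ∪ s₂, (∃ w ∈ s₁, w ≠ v) ∧ ∃ w ∈ s₂, w ≠ v := by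
    intro v hv
    obtain ⟨-, -, h₁, h₂⟩ := (mem_boundaryJoinFaces_iff h).1 (hsingle v hv)
    simp only [Finset.subset_singleton_iff', not_forall, exists_prop] at h₁ h₂
    exact ⟨h₁, h₂⟩
  obtain ⟨v, hv⟩ := hne
  obtain ⟨⟨a, ha, -⟩, ⟨b, hb, -⟩⟩ := key v hv
  obtain ⟨a', ha', haa'⟩ := (key a (Finset.mem_union_left _ ha)).1
  obtain ⟨b', hb', hbb'⟩ := (key b (Finset.mem_union_right _ hb)).2
  exact ⟨Finset.one_lt_card.2 ⟨a, ha, a', ha', haa'.symm⟩,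
    Finset.one_lt_card.2 ⟨b, hb, b', hb', hbb'.symm⟩⟩

end BoundaryJoin

theorem _root_.Finset.exists_eq_sdiff_pair {α : Type*} [DecidableEq α] {s V : Finset α}
    (hs : s ⊆ V) (hcard : s.card + 2 = V.card) : ∃ x ∈ V, ∃ y ∈ V, x ≠ y ∧ s = V \ {x, y} := by
  obtain ⟨x, y, hxy, hVs⟩ := Finset.card_eq_two.1 (show (V \ s).card = 2 by
    rw [Finset.card_sdiff_of_subset hs]; omega)
  have hmem : ∀ w ∈ ({x, y} : Finset α), w ∈ V := fun w hw =>
    (Finset.mem_sdiff.1 (hVs ▸ hw)).1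
  exact ⟨x, hmem x (by simp), y, hmem y (by simp), hxy,
    by rw [← hVs, Finset.sdiff_sdiff_eq_self hs]⟩

theorem _root_.Finset.iff_not_of_card_filter_triple_eq_two {α : Type*} [DecidableEq α]
    {p : α → Prop} [DecidablePred p] {x y z : α} (hxy : x ≠ y) (hxz : x ≠ z) (hyz : y ≠ z)
    (h : (({x, y, z} : Finset α).filter p).card = 2) (hz : p z) : p y ↔ ¬ p x := by
  by_cases hx : p x <;> by_cases hy : p y <;>
    simp [Finset.filter_insert, Finset.filter_singleton, hx, hy, hz, hxy, hxz, hyz] at h ⊢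

theorem _root_.SimpleGraph.adj_iff_adj_iff_not_adj {α : Type*} (G : SimpleGraph α) {V : Set α}
    (h : ∀ x ∈ V, ∀ y ∈ V, ∀ z ∈ V, x ≠ z → y ≠ z → G.Adj x y → (G.Adj x z ↔ ¬ G.Adj y z))
    {u x y : α} (hu : u ∈ V) (hx : x ∈ V) (hy : y ∈ V) :
    G.Adj x y ↔ (G.Adj u x ↔ ¬ G.Adj u y) := by
  rcases eq_or_ne x u with rfl | hxu
  · simp
  rcases eq_or_ne y u with rfl | hyu
  · simp [G.adj_comm]
  rcases eq_or_ne x y with rfl | hxy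
  · simp
  by_cases hux : G.Adj u x
  · have := h u hu x hx y hy hyu.symm hxy hux
    tauto
  by_cases huy : G.Adj u y
  · have := h u hu y hy x hx hxu.symm hxy.symm huy
    simp only [hux, huy, G.adj_comm y x] at this ⊢
    tauto
  · have := h x hx y hy u hu hxu hyu
    simp only [hux, huy, G.adj_comm x u, G.adj_comm y u] at this ⊢
    tauto

section MissingPairs

variable {𝕜 E : Type*} [Ring 𝕜] [PartialOrder 𝕜] [AddCommGroup E] [Module 𝕜 E] [DecidableEq E]
  {K : SimplicialComplex 𝕜 E} {V : Finset E} {d : ℕ}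

open Classical in
theorem ncard_faces_superset_eq_card_filter (hV : ∀ s ∈ K.faces, s ⊆ V) (σ : Finset E) :
    {t | t ∈ K.faces ∧ t.card = σ.card + 1 ∧ σ ⊆ t}.ncard =
      ((V \ σ).filter fun w => insert w σ ∈ K.faces).card := by
  have : {t | t ∈ K.faces ∧ t.card = σ.card + 1 ∧ σ ⊆ t} =
      ↑(((V \ σ).filter fun w => insert w σ ∈ K.faces).image (insert · σ)) := by
    ext t
    simp only [Set.mem_ofPred_eq, Finset.coe_image, Finset.coe_filter, Set.mem_image,
      Finset.mem_sdiff]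
    constructor
    · rintro ⟨ht, hcard, hσt⟩
      obtain ⟨w, hw, rfl⟩ := Finset.exists_eq_insert_iff.2 ⟨hσt, hcard.symm⟩
      exact ⟨w, ⟨⟨hV _ ht (Finset.mem_insert_self w σ), hw⟩, ht⟩, rfl⟩
    · rintro ⟨w, ⟨⟨-, hw⟩, ht⟩, rfl⟩
      exact ⟨ht, Finset.card_insert_of_notMem hw, Finset.subset_insert w σ⟩
  rw [this, Set.ncard_coe_finset, Finset.card_image_of_injOn]
  intro a ha b hb hab
  have ha' := (Finset.mem_sdiff.1 (Finset.mem_filter.1 ha).1).2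
  have : a ∈ insert b σ := (show insert a σ = insert b σ from hab) ▸ Finset.mem_insert_self a σ
  exact (Finset.mem_insert.1 this).resolve_right ha'

def missingPairGraph (K : SimplicialComplex 𝕜 E) (V : Finset E) : SimpleGraph E where
  Adj x y := x ≠ y ∧ V \ {x, y} ∈ K.faces
  symm := ⟨fun x y h => ⟨h.1.symm, Finset.pair_comm x y ▸ h.2⟩⟩
  loopless := ⟨fun _ h => h.1 rfl⟩

@[simp]
theorem missingPairGraph_adj {x y : E} :
    (missingPairGraph K V).Adj x y ↔ x ≠ y ∧ V \ {x, y} ∈ K.faces :=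
  Iff.rfl

theorem missingPairGraph_adj_iff_not_adj (hd : 1 ≤ d) (hV : ∀ s ∈ K.faces, s ⊆ V)
    (hcard : V.card = d + 3)
    (hridge : ∀ s ∈ K.faces, s.card = d → {t | t ∈ K.faces ∧ t.card = d + 1 ∧ s ⊆ t}.ncard = 2)
    {x y z : E} (hx : x ∈ V) (hy : y ∈ V) (hz : z ∈ V) (hxz : x ≠ z) (hyz : y ≠ z)
    (hxy : (missingPairGraph K V).Adj x y) :
    (missingPairGraph K V).Adj x z ↔ ¬ (missingPairGraph K V).Adj y z := by
  classical
  obtain ⟨hxy, hfacet⟩ := missingPairGraph_adj.1 hxy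
  have hTV : {x, y, z} ⊆ V := by simp [Finset.insert_subset_iff, hx, hy, hz]
  have hσcard : (V \ {x, y, z}).card = d := by
    rw [Finset.card_sdiff_of_subset hTV, Finset.card_eq_three.2 ⟨x, y, z, hxy, hxz, hyz, rfl⟩]
    omega
  have hσ : V \ {x, y, z} ∈ K.faces := K.down_closed hfacet
    (Finset.sdiff_subset_sdiff subset_rfl (by simp)) (Finset.card_pos.1 (by omega))
  have hcount := hridge _ hσ hσcard
  rw [← hσcard, ncard_faces_superset_eq_card_filter hV, Finset.sdiff_sdiff_eq_self hTV] at hcount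
  have hzT : insert z (V \ {x, y, z}) = V \ {x, y} := by ext w; simp; grind
  have hxT : insert x (V \ {x, y, z}) = V \ {y, z} := by ext w; simp; grind
  have hyT : insert y (V \ {x, y, z}) = V \ {x, z} := by ext w; simp; grind
  have key := Finset.iff_not_of_card_filter_triple_eq_two hxy hxz hyz hcount (hzT ▸ hfacet)
  rw [hxT, hyT] at key
  simpa [hxz, hyz] using key

theorem exists_faces_eq_boundaryJoinFaces (hd : 1 ≤ d) (hV : (V : Set E) = K.vertices)
    (hcard : V.card = d + 3) (hpure : ∀ s ∈ K.faces, ∃ t ∈ K.faces, t.card = d + 1 ∧ s ⊆ t)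
    (hridge : ∀ s ∈ K.faces, s.card = d → {t | t ∈ K.faces ∧ t.card = d + 1 ∧ s ⊆ t}.ncard = 2) :
    ∃ A B : Finset E, Disjoint A B ∧ A ∪ B = V ∧ K.faces = boundaryJoinFaces A B := by
  classical
  have hsub : ∀ s ∈ K.faces, s ⊆ V := fun s hs x hx => by
    rw [← Finset.mem_coe, hV]
    exact K.down_closed hs (Finset.singleton_subset_iff.2 hx) (Finset.singleton_nonempty x)
  obtain ⟨u, hu⟩ : V.Nonempty := Finset.card_pos.1 (by omega)
  set G := missingPairGraph K V
  have hG : ∀ x ∈ V, ∀ y ∈ V, G.Adj x y ↔ (G.Adj u x ↔ ¬ G.Adj u y) := fun x hx y hy =>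
    G.adj_iff_adj_iff_not_adj (fun x hx y hy z hz hxz hyz =>
      missingPairGraph_adj_iff_not_adj hd hsub hcard hridge hx hy hz hxz hyz) hu hx hy
  have hAB := Finset.disjoint_filter_filter_not V V (G.Adj u)
  refine ⟨V.filter (G.Adj u ·), V.filter (¬ G.Adj u ·), hAB,
    Finset.filter_union_filter_not_eq _ _, ?_⟩
  ext t
  rw [mem_boundaryJoinFaces_iff hAB, Finset.filter_union_filter_not_eq]
  constructor
  · intro ht
    obtain ⟨F, hF, hFcard, htF⟩ := hpure t ht
    obtain ⟨x, hx, y, hy, hxy, rfl⟩ := Finset.exists_eq_sdiff_pair (hsub F hF) (by omega)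
    have hsplit := (hG x hx y hy).1 ⟨hxy, hF⟩
    have hxt : x ∉ t := fun h => by simpa using htF h
    have hyt : y ∉ t := fun h => by simpa using htF h
    refine ⟨K.nonempty_of_mem_faces ht, htF.trans Finset.sdiff_subset, ?_⟩
    simp only [Finset.not_subset, Finset.mem_filter]
    by_cases hux : G.Adj u x
    · exact ⟨⟨x, ⟨hx, hux⟩, hxt⟩, ⟨y, ⟨hy, hsplit.1 hux⟩, hyt⟩⟩
    · exact ⟨⟨y, ⟨hy, by tauto⟩, hyt⟩, ⟨x, ⟨hx, hux⟩, hxt⟩⟩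
  · rintro ⟨htne, htV, hA, hB⟩
    obtain ⟨a, ha, hat⟩ := Finset.not_subset.1 hA
    obtain ⟨b, hb, hbt⟩ := Finset.not_subset.1 hB
    rw [Finset.mem_filter] at ha hb
    have hab : G.Adj a b := (hG a ha.1 b hb.1).2 (by tauto)
    refine K.down_closed hab.2 (fun w hw => Finset.mem_sdiff.2 ⟨htV hw, ?_⟩) htne
    intro hwab
    rcases Finset.mem_insert.1 hwab with rfl | h
    · exact hat hw
    · exact hbt (Finset.mem_singleton.1 h ▸ hw)

end MissingPairs

section LevelSets

variable {E : Type*} [AddCommGroup E] [Module ℝ E]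

theorem convexHull_inter_level_eq_convexHull_filter {F : Type*} [FunLike F E ℝ]
    [LinearMapClass F ℝ E ℝ] (P : Finset E) (f : F) {M : ℝ} (hle : ∀ v ∈ P, f v ≤ M) :
    convexHull ℝ ↑P ∩ {x | f x = M} = convexHull ℝ ↑(P.filter (f · = M)) := by
  apply subset_antisymm
  · rintro x ⟨hx, hfx⟩
    obtain ⟨w, hw0, hw1, rfl⟩ := Finset.mem_convexHull'.1 hx
    have hslack : ∑ v ∈ P, w v * (M - f v) = 0 := by
      simp only [mul_sub, Finset.sum_sub_distrib, ← Finset.sum_mul, hw1, one_mul]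
      simpa [map_sum, map_smul] using sub_eq_zero.2 hfx.symm
    have hsupp : ∀ v ∈ P, w v ≠ 0 → f v = M := fun v hv hw => by
      have := (Finset.sum_eq_zero_iff_of_nonneg fun v hv =>
        mul_nonneg (hw0 v hv) (sub_nonneg.2 (hle v hv))).1 hslack v hv
      linarith [(mul_eq_zero.1 this).resolve_left hw]
    refine Finset.mem_convexHull'.2 ⟨w, fun v hv => hw0 v (Finset.mem_filter.1 hv).1, ?_, ?_⟩
    · rwa [Finset.sum_filter_of_ne hsupp]
    · exact Finset.sum_filter_of_ne fun v hv hwv => hsupp v hv (left_ne_zero_of_smul hwv)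
  · refine Set.subset_inter (convexHull_mono (Finset.coe_subset.2 (Finset.filter_subset _ _)))
      (convexHull_min (fun v hv => (Finset.mem_filter.1 hv).2) ?_)
    exact convex_hyperplane ⟨map_add f, map_smul f⟩ M

theorem forall_apply_eq_of_sum_eq_zero {A B : Finset E} {F : Type*} [FunLike F E ℝ]
    [LinearMapClass F ℝ E ℝ]
    (hA : ∑ v ∈ A, v = 0) (hB : ∑ v ∈ B, v = 0) (hAne : A.Nonempty) (f : F) {M : ℝ}
    (hAM : ∀ v ∈ A, f v = M) (hBM : ∀ v ∈ B, f v ≤ M) : ∀ v ∈ B, f v = M := by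
  have hM : (A.card : ℝ) * M = 0 := by
    rw [← nsmul_eq_mul, ← Finset.sum_const, ← Finset.sum_congr rfl hAM, ← map_sum, hA, map_zero]
  obtain rfl : M = 0 :=
    (mul_eq_zero.1 hM).resolve_left (by exact_mod_cast hAne.card_pos.ne')
  exact (Finset.sum_eq_zero_iff_of_nonpos hBM).1 (by rw [← map_sum, hB, map_zero])

variable [TopologicalSpace E]

theorem toExposed_convexHull_eq (P : Finset E) (ℓ : E →L[ℝ] ℝ) {M : ℝ}
    (hle : ∀ v ∈ P, ℓ v ≤ M) (hM : ∃ v ∈ P, ℓ v = M) :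
    {x ∈ convexHull ℝ ↑P | ∀ y ∈ convexHull ℝ ↑P, ℓ y ≤ ℓ x} =
      convexHull ℝ ↑(P.filter (ℓ · = M)) := by
  rw [← convexHull_inter_level_eq_convexHull_filter P ℓ hle]
  have hbound : ∀ y ∈ convexHull ℝ (P : Set E), ℓ y ≤ M :=
    convexHull_min hle ((convex_Iic M).linear_preimage ℓ.toLinearMap)
  obtain ⟨v, hv, hvM⟩ := hM
  ext x
  simp only [Set.mem_ofPred_eq, Set.mem_inter_iff]
  refine and_congr_right fun hx => ⟨fun h => ?_, fun h y hy => h ▸ hbound y hy⟩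
  exact le_antisymm (hbound x hx) (hvM ▸ h v (subset_convexHull ℝ _ hv))

end LevelSets

theorem _root_.Finset.sum_ite_mem_one_sub_div_eq_zero {E : Type*} [DecidableEq E] {S t : Finset E}
    (h : ¬ S ⊆ t) :
    ∑ v ∈ S, (if v ∈ t then (1 : ℝ) else 1 - S.card / (S \ t).card) = 0 := by
  have hpos : (0 : ℝ) < (S \ t).card := by
    exact_mod_cast Finset.card_pos.2 (Finset.sdiff_nonempty.2 h)
  rw [Finset.sum_ite, Finset.sum_const, Finset.sum_const, Finset.filter_mem_eq_inter,
    ← Finset.sdiff_eq_filter, nsmul_eq_mul, nsmul_eq_mul, ← Finset.card_inter_add_card_sdiff S t]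
  push_cast
  field_simp
  ring

theorem one_sub_card_div_card_sdiff_lt_one {E : Type*} [DecidableEq E] {S t : Finset E}
    (h : ¬ S ⊆ t) : 1 - (S.card : ℝ) / (S \ t).card < 1 := by
  have hne := Finset.sdiff_nonempty.2 h
  have : (0 : ℝ) < S.card / (S \ t).card := div_pos
    (by exact_mod_cast Finset.card_pos.2 (hne.mono Finset.sdiff_subset))
    (by exact_mod_cast Finset.card_pos.2 hne)
  linarith

section FreeSum

variable {E : Type*} [AddCommGroup E] [Module ℝ E] [TopologicalSpace E] [DecidableEq E]
  {A B t u : Finset E}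

/-- `A` and `B` are the vertex sets of two simplices with barycentre `0` in complementary
subspaces, so that `conv (A ∪ B)` is their free sum. `exists_functional` is the dual form of
"the only linear relations on `A ∪ B` are `∑ A = 0` and `∑ B = 0`". -/
structure IsFreeSumOfSimplices (A B : Finset E) : Prop where
  disjoint : Disjoint A B
  nonempty_left : A.Nonempty
  nonempty_right : B.Nonempty
  sum_left : ∑ v ∈ A, v = 0
  sum_right : ∑ v ∈ B, v = 0
  exists_functional : ∀ g : E → ℝ, ∑ v ∈ A, g v = 0 → ∑ v ∈ B, g v = 0 →
    ∃ ℓ : E →L[ℝ] ℝ, ∀ v ∈ A ∪ B, ℓ v = g v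

namespace IsFreeSumOfSimplices

theorem symm (h : IsFreeSumOfSimplices A B) : IsFreeSumOfSimplices B A where
  disjoint := h.disjoint.symm
  nonempty_left := h.nonempty_right
  nonempty_right := h.nonempty_left
  sum_left := h.sum_right
  sum_right := h.sum_left
  exists_functional g hB hA := by
    simpa only [Finset.union_comm B A] using h.exists_functional g hA hB

theorem exists_functional_eq_ite (h : IsFreeSumOfSimplices A B)
    (ht : t ∈ boundaryJoinFaces A B) {v : E} (hv : v ∈ t) :
    ∃ ℓ : E →L[ℝ] ℝ, ∀ w ∈ t, ℓ w = if w = v then 1 else 0 := by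
  have htAB := (mem_boundaryJoinFaces_iff h.disjoint).1 ht
  wlog hvA : v ∈ A generalizing A B
  · exact this h.symm (boundaryJoinFaces_comm A B ▸ ht)
      ((mem_boundaryJoinFaces_iff h.symm.disjoint).1 (boundaryJoinFaces_comm A B ▸ ht))
      ((Finset.mem_union.1 (htAB.2.1 hv)).resolve_left hvA)
  obtain ⟨a, haA, hat⟩ := Finset.not_subset.1 htAB.2.2.1
  have hvB := Finset.disjoint_left.1 h.disjoint hvA
  have haB := Finset.disjoint_left.1 h.disjoint haA
  obtain ⟨ℓ, hℓ⟩ := h.exists_functional (fun w => (if w = v then 1 else 0) - if w = a then 1 else 0)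
    (by simp [Finset.sum_sub_distrib, hvA, haA]) (by simp [Finset.sum_sub_distrib, hvB, haB])
  refine ⟨ℓ, fun w hw => ?_⟩
  rw [hℓ w (htAB.2.1 hw), if_neg (ne_of_mem_of_not_mem hw hat), sub_zero]

theorem linearIndependent (h : IsFreeSumOfSimplices A B) (ht : t ∈ boundaryJoinFaces A B) :
    LinearIndependent ℝ ((↑) : t → E) := by
  refine LinearIndepOn.linearIndependent (v := id) (linearIndepOn_finset_iff.2 fun c hc v hv => ?_)
  obtain ⟨ℓ, hℓ⟩ := h.exists_functional_eq_ite ht hv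
  have := congrArg ℓ hc
  rw [map_sum, map_zero, Finset.sum_congr rfl fun w hw => by rw [map_smul, id, hℓ w hw]] at this
  simpa [hv] using this

theorem exists_supporting_functional (h : IsFreeSumOfSimplices A B)
    (ht : t ∈ boundaryJoinFaces A B) :
    ∃ ℓ : E →L[ℝ] ℝ, (∀ v ∈ A ∪ B, ℓ v ≤ 1) ∧ (A ∪ B).filter (ℓ · = 1) = t := by
  obtain ⟨-, htAB, hA, hB⟩ := (mem_boundaryJoinFaces_iff h.disjoint).1 ht
  -- `1` on `t`; on the rest of each block, the constant below `1` that makes the block sum vanish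
  set cA : ℝ := 1 - A.card / (A \ t).card
  set cB : ℝ := 1 - B.card / (B \ t).card
  obtain ⟨ℓ, hℓ⟩ := h.exists_functional
    (fun v => if v ∈ t then 1 else if v ∈ A then cA else cB)
    (by
      rw [Finset.sum_congr rfl fun v hv => by rw [if_pos hv]]
      exact Finset.sum_ite_mem_one_sub_div_eq_zero hA)
    (by
      rw [Finset.sum_congr rfl fun v hv => by rw [if_neg (Finset.disjoint_right.1 h.disjoint hv)]]
      exact Finset.sum_ite_mem_one_sub_div_eq_zero hB)
  have hlt : ∀ v ∈ A ∪ B, v ∉ t → ℓ v < 1 := fun v hv hvt => by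
    rw [hℓ v hv, if_neg hvt]
    split_ifs
    exacts [one_sub_card_div_card_sdiff_lt_one hA, one_sub_card_div_card_sdiff_lt_one hB]
  have hone : ∀ v ∈ t, ℓ v = 1 := fun v hv => by rw [hℓ v (htAB hv), if_pos hv]
  refine ⟨ℓ, fun v hv => ?_, ?_⟩
  · by_cases hvt : v ∈ t
    exacts [(hone v hvt).le, (hlt v hv hvt).le]
  · ext v
    rw [Finset.mem_filter]
    refine ⟨fun ⟨hv, hv1⟩ => ?_, fun hv => ⟨htAB hv, hone v hv⟩⟩
    by_contra hvt
    exact (hlt v hv hvt).ne hv1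

theorem isExposed_convexHull (h : IsFreeSumOfSimplices A B) (ht : t ∈ boundaryJoinFaces A B) :
    IsExposed ℝ (convexHull ℝ (↑(A ∪ B) : Set E)) (convexHull ℝ ↑t) := fun _ => by
  obtain ⟨ℓ, hle, hfilter⟩ := h.exists_supporting_functional ht
  obtain ⟨v, hv⟩ := ((mem_boundaryJoinFaces_iff h.disjoint).1 ht).1
  rw [← hfilter, Finset.mem_filter] at hv
  exact ⟨ℓ, by rw [toExposed_convexHull_eq _ ℓ hle ⟨v, hv⟩, hfilter]⟩

theorem convexHull_ne (h : IsFreeSumOfSimplices A B) (ht : t ∈ boundaryJoinFaces A B) :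
    convexHull ℝ (t : Set E) ≠ convexHull ℝ ↑(A ∪ B) := by
  obtain ⟨ℓ, hle, hfilter⟩ := h.exists_supporting_functional ht
  obtain ⟨a, haA, hat⟩ := Finset.not_subset.1 ((mem_boundaryJoinFaces_iff h.disjoint).1 ht).2.2.1
  intro heq
  have ha : a ∈ convexHull ℝ ↑(A ∪ B) ∩ {x | ℓ x = 1} := by
    rw [convexHull_inter_level_eq_convexHull_filter _ ℓ hle, hfilter, heq]
    exact subset_convexHull ℝ _ (Finset.mem_union_left B haA)
  exact hat (hfilter ▸ Finset.mem_filter.2 ⟨Finset.mem_union_left B haA, ha.2⟩)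

theorem convexHull_inter_subset (h : IsFreeSumOfSimplices A B) (ht : t ∈ boundaryJoinFaces A B)
    (hu : u ∈ boundaryJoinFaces A B) :
    convexHull ℝ ↑t ∩ convexHull ℝ ↑u ⊆ convexHull ℝ (↑t ∩ ↑u : Set E) := by
  obtain ⟨ℓ₁, hle₁, hfilter₁⟩ := h.exists_supporting_functional ht
  obtain ⟨ℓ₂, hle₂, hfilter₂⟩ := h.exists_supporting_functional hu
  have hle : ∀ v ∈ A ∪ B, (ℓ₁ + ℓ₂) v ≤ 2 := fun v hv => by
    simpa [one_add_one_eq_two] using add_le_add (hle₁ v hv) (hle₂ v hv)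
  have hfilter : (A ∪ B).filter ((ℓ₁ + ℓ₂) · = 2) = t ∩ u := by
    rw [← hfilter₁, ← hfilter₂, ← Finset.filter_and]
    refine Finset.filter_congr fun v hv => ?_
    have := hle₁ v hv
    have := hle₂ v hv
    simp only [FunLike.coe_add, Pi.add_apply]
    constructor
    · intro; constructor <;> linarith
    · rintro ⟨h₁, h₂⟩; linarith
  rintro x ⟨hxt, hxu⟩
  rw [← hfilter₁, ← convexHull_inter_level_eq_convexHull_filter _ ℓ₁ hle₁] at hxt
  rw [← hfilter₂, ← convexHull_inter_level_eq_convexHull_filter _ ℓ₂ hle₂] at hxu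
  rw [← Finset.coe_inter, ← hfilter, ← convexHull_inter_level_eq_convexHull_filter _ _ hle]
  have h₁ : ℓ₁ x = 1 := hxt.2
  have h₂ : ℓ₂ x = 1 := hxu.2
  refine ⟨hxt.1, show (ℓ₁ + ℓ₂) x = 2 by norm_num [h₁, h₂]⟩

theorem exists_eq_convexHull_of_isExposed (h : IsFreeSumOfSimplices A B) {F : Set E}
    (hF : F.Nonempty) (hexp : IsExposed ℝ (convexHull ℝ ↑(A ∪ B)) F)
    (hproper : F ≠ convexHull ℝ ↑(A ∪ B)) :
    ∃ s ∈ boundaryJoinFaces A B, F = convexHull ℝ ↑s := by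
  obtain ⟨ℓ, rfl⟩ := hexp hF
  obtain ⟨v₀, hv₀, hmax⟩ :=
    (A ∪ B).exists_max_image ℓ (h.nonempty_left.mono Finset.subset_union_left)
  have hexposed := toExposed_convexHull_eq _ ℓ hmax ⟨v₀, hv₀, rfl⟩
  have hnot_all : ¬ ∀ v ∈ A ∪ B, ℓ v = ℓ v₀ := fun hall =>
    hproper (by rw [hexposed, Finset.filter_true_of_mem hall])
  refine ⟨(A ∪ B).filter (ℓ · = ℓ v₀), (mem_boundaryJoinFaces_iff h.disjoint).2
    ⟨⟨v₀, Finset.mem_filter.2 ⟨hv₀, rfl⟩⟩, Finset.filter_subset _ _, fun hA => hnot_all ?_,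
      fun hB => hnot_all ?_⟩, hexposed⟩
  · have hAmax : ∀ v ∈ A, ℓ v = ℓ v₀ := fun v hv => (Finset.mem_filter.1 (hA hv)).2
    have hBmax := forall_apply_eq_of_sum_eq_zero h.sum_left h.sum_right h.nonempty_left ℓ
      hAmax fun v hv => hmax v (Finset.mem_union_right A hv)
    exact fun v hv => (Finset.mem_union.1 hv).elim (hAmax v) (hBmax v)
  · have hBmax : ∀ v ∈ B, ℓ v = ℓ v₀ := fun v hv => (Finset.mem_filter.1 (hB hv)).2
    have hAmax := forall_apply_eq_of_sum_eq_zero h.sum_right h.sum_left h.nonempty_right ℓ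
      hBmax fun v hv => hmax v (Finset.mem_union_left B hv)
    exact fun v hv => (Finset.mem_union.1 hv).elim (hAmax v) (hBmax v)

def boundaryComplex (h : IsFreeSumOfSimplices A B) : SimplicialComplex ℝ E where
  faces := boundaryJoinFaces A B
  isRelLowerSet_faces s hs := by
    obtain ⟨hs, hsAB, hA, hB⟩ := (mem_boundaryJoinFaces_iff h.disjoint).1 hs
    exact ⟨hs, fun t hts ht => (mem_boundaryJoinFaces_iff h.disjoint).2
      ⟨ht, hts.trans hsAB, fun hAt => hA (hAt.trans hts), fun hBt => hB (hBt.trans hts)⟩⟩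
  indep ht := (h.linearIndependent ht).affineIndependent
  inter_subset_convexHull ht hu := h.convexHull_inter_subset ht hu

end IsFreeSumOfSimplices

end FreeSum

theorem IsFreeSumOfSimplices.isBoundaryComplexOfPolytope {A B : Finset (Spc n)}
    (h : IsFreeSumOfSimplices A B) : IsBoundaryComplexOfPolytope h.boundaryComplex (A ∪ B) :=
  ⟨fun _ hs => ⟨Finset.coe_subset.2 ((mem_boundaryJoinFaces_iff h.disjoint).1 hs).2.1,
    h.isExposed_convexHull hs, h.convexHull_ne hs⟩,
    fun _ hF hexp hproper => h.exists_eq_convexHull_of_isExposed hF hexp hproper⟩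

section CentredSimplex

variable {ι : Type*} [DecidableEq ι]

theorem single_one_injective : Function.Injective fun i : ι => (Pi.single i 1 : ι → ℝ) :=
  fun i j h => by simpa [Pi.single_apply] using congrFun h i

variable [Fintype ι]

/-- A simplex in the coordinate subspace `ℝ^I` with barycentre `0`. -/
noncomputable def centredSimplex (I : Finset ι) : Finset (ι → ℝ) :=
  insert (-∑ i ∈ I, Pi.single i 1) (I.image fun i => Pi.single i 1)

theorem neg_sum_single_notMem_image (I : Finset ι) :
    -∑ i ∈ I, (Pi.single i 1 : ι → ℝ) ∉ I.image fun i => Pi.single i 1 := by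
  simp only [Finset.mem_image, not_exists, not_and]
  intro j hj h
  have := congrFun h j
  norm_num [Finset.sum_apply, Pi.single_apply, hj] at this

theorem card_centredSimplex (I : Finset ι) : (centredSimplex I).card = I.card + 1 := by
  rw [centredSimplex, Finset.card_insert_of_notMem (neg_sum_single_notMem_image I),
    Finset.card_image_of_injective _ single_one_injective]

theorem sum_centredSimplex (I : Finset ι) : ∑ v ∈ centredSimplex I, v = 0 := by
  rw [centredSimplex, Finset.sum_insert (neg_sum_single_notMem_image I),
    Finset.sum_image fun i _ j _ h => single_one_injective h, neg_add_cancel]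

theorem apply_eq_zero_of_mem_centredSimplex {I : Finset ι} {v : ι → ℝ} {j : ι}
    (hv : v ∈ centredSimplex I) (hj : j ∉ I) : v j = 0 := by
  simp only [centredSimplex, Finset.mem_insert, Finset.mem_image] at hv
  rcases hv with rfl | ⟨i, hi, rfl⟩
  · simp [Finset.sum_apply, Pi.single_apply, hj]
  · simp [(ne_of_mem_of_not_mem hi hj).symm]

theorem ne_zero_of_mem_centredSimplex {I : Finset ι} (hI : I.Nonempty) {v : ι → ℝ}
    (hv : v ∈ centredSimplex I) : v ≠ 0 := by
  simp only [centredSimplex, Finset.mem_insert, Finset.mem_image] at hv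
  obtain ⟨j, hj⟩ := hI
  rcases hv with rfl | ⟨i, hi, rfl⟩
  · exact fun h => by simpa [Finset.sum_apply, Pi.single_apply, hj] using congrFun h j
  · exact fun h => by simpa using congrFun h i

theorem disjoint_centredSimplex_compl {I : Finset ι} (hI : I.Nonempty) :
    Disjoint (centredSimplex I) (centredSimplex Iᶜ) :=
  Finset.disjoint_left.2 fun v hv hv' => ne_zero_of_mem_centredSimplex hI hv <| funext fun j => by
    by_cases hj : j ∈ I
    · exact apply_eq_zero_of_mem_centredSimplex hv' (Finset.notMem_compl.2 hj)
    · exact apply_eq_zero_of_mem_centredSimplex hv hj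

theorem apply_eq_of_sum_centredSimplex_eq_zero {F : Type*} [FunLike F (ι → ℝ) ℝ]
    [LinearMapClass F ℝ (ι → ℝ) ℝ] {I : Finset ι} (f : F) (g : (ι → ℝ) → ℝ)
    (hfg : ∀ i ∈ I, f (Pi.single i 1) = g (Pi.single i 1))
    (hg : ∑ v ∈ centredSimplex I, g v = 0) : ∀ v ∈ centredSimplex I, f v = g v := by
  rw [centredSimplex, Finset.sum_insert (neg_sum_single_notMem_image I),
    Finset.sum_image fun i _ j _ h => single_one_injective h] at hg
  intro v hv
  simp only [centredSimplex, Finset.mem_insert, Finset.mem_image] at hv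
  rcases hv with rfl | ⟨i, hi, rfl⟩
  · rw [map_neg, map_sum, Finset.sum_congr rfl hfg]
    linarith
  · exact hfg i hi

theorem isFreeSumOfSimplices_centredSimplex {I : Finset ι} (hI : I.Nonempty) :
    IsFreeSumOfSimplices (centredSimplex I) (centredSimplex Iᶜ) where
  disjoint := disjoint_centredSimplex_compl hI
  nonempty_left := Finset.insert_nonempty _ _
  nonempty_right := Finset.insert_nonempty _ _
  sum_left := sum_centredSimplex I
  sum_right := sum_centredSimplex Iᶜ
  exists_functional g hgI hgIc := by
    set ℓ : (ι → ℝ) →L[ℝ] ℝ := ∑ i, g (Pi.single i 1) • ContinuousLinearMap.proj i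
    have hℓ : ∀ i, ℓ (Pi.single i 1) = g (Pi.single i 1) := fun i => by
      simp [ℓ, Pi.single_apply]
    refine ⟨ℓ, fun v hv => ?_⟩
    rcases Finset.mem_union.1 hv with hv | hv
    · exact apply_eq_of_sum_centredSimplex_eq_zero ℓ g (fun i _ => hℓ i) hgI v hv
    · exact apply_eq_of_sum_centredSimplex_eq_zero ℓ g (fun i _ => hℓ i) hgIc v hv

theorem affineSpan_centredSimplex_union_compl {I : Finset ι} (hI : I.Nonempty) :
    affineSpan ℝ (↑(centredSimplex I ∪ centredSimplex Iᶜ) : Set (ι → ℝ)) = ⊤ := by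
  set P := centredSimplex I ∪ centredSimplex Iᶜ
  have h0 : (0 : ι → ℝ) ∈ affineSpan ℝ (P : Set (ι → ℝ)) := by
    refine convexHull_subset_affineSpan _ (convexHull_mono (Finset.coe_subset.2
      Finset.subset_union_left) (Finset.mem_convexHull'.2 ⟨fun _ => 1 / (I.card + 1),
        fun _ _ => by positivity, ?_, ?_⟩))
    · rw [Finset.sum_const, card_centredSimplex, nsmul_eq_mul]
      push_cast
      field_simp
    · rw [← Finset.smul_sum, sum_centredSimplex, smul_zero]
  have hspan : Submodule.span ℝ (P : Set (ι → ℝ)) = ⊤ := by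
    refine eq_top_iff.2 ((Pi.basisFun ℝ ι).span_eq.ge.trans (Submodule.span_mono ?_))
    rintro _ ⟨i, rfl⟩
    by_cases hi : i ∈ I
    all_goals rw [Finset.mem_coe, Pi.basisFun_apply]
    · exact Finset.mem_union_left _ (Finset.mem_insert_of_mem (Finset.mem_image_of_mem _ hi))
    · exact Finset.mem_union_right _
        (Finset.mem_insert_of_mem (Finset.mem_image_of_mem _ (Finset.mem_compl.2 hi)))
  rw [← affineSpan_insert_eq_affineSpan ℝ h0]
  apply SetLike.coe_injective
  rw [affineSpan_insert_zero, hspan]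
  rfl

end CentredSimplex

theorem _root_.Finset.exists_injOn_image_eq_image_eq {α β : Type*} [DecidableEq α]
    [DecidableEq β] [Nonempty β] {s₁ s₂ : Finset α} {t₁ t₂ : Finset β} (hs : Disjoint s₁ s₂) (ht : Disjoint t₁ t₂)
    (h₁ : s₁.card = t₁.card) (h₂ : s₂.card = t₂.card) :
    ∃ f : α → β, Set.InjOn f ↑(s₁ ∪ s₂) ∧ s₁.image f = t₁ ∧ s₂.image f = t₂ := by
  classical
  obtain ⟨f₁, hf₁⟩ := (s₁ : Set α).toFinite.exists_bijOn_of_encard_eq (t := (t₁ : Set β))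
    (by simp [h₁])
  obtain ⟨f₂, hf₂⟩ := (s₂ : Set α).toFinite.exists_bijOn_of_encard_eq (t := (t₂ : Set β))
    (by simp [h₂])
  have hb₁ : Set.BijOn ((s₁ : Set α).piecewise f₁ f₂) s₁ t₁ :=
    hf₁.congr (Set.piecewise_eqOn _ _ _).symm
  have hb₂ : Set.BijOn ((s₁ : Set α).piecewise f₁ f₂) s₂ t₂ :=
    hf₂.congr ((Set.piecewise_eqOn_compl _ _ _).symm.mono
      (Set.subset_compl_iff_disjoint_left.2 (Finset.disjoint_coe.2 hs)))
  refine ⟨(s₁ : Set α).piecewise f₁ f₂, ?_, ?_, ?_⟩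
  · rw [Finset.coe_union, Set.injOn_union (Finset.disjoint_coe.2 hs)]
    exact ⟨hb₁.injOn, hb₂.injOn, fun x hx y hy hxy =>
      Finset.disjoint_left.1 ht (hb₁.mapsTo hx) (hxy ▸ hb₂.mapsTo hy)⟩
  · exact Finset.coe_injective (by rw [Finset.coe_image, hb₁.image_eq])
  · exact Finset.coe_injective (by rw [Finset.coe_image, hb₂.image_eq])

theorem image_mem_boundaryJoinFaces_iff {α β : Type*} [DecidableEq α] [DecidableEq β]
    {s₁ s₂ s : Finset α} {f : α → β} (hs : Disjoint s₁ s₂) (hf : Set.InjOn f ↑(s₁ ∪ s₂))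
    (hsub : s ⊆ s₁ ∪ s₂) :
    s.image f ∈ boundaryJoinFaces (s₁.image f) (s₂.image f) ↔ s ∈ boundaryJoinFaces s₁ s₂ := by
  have hcoe : ∀ r ⊆ s₁ ∪ s₂, (r : Set α) ⊆ ↑(s₁ ∪ s₂) := fun r hr => Finset.coe_subset.2 hr
  have himage : ∀ r ⊆ s₁ ∪ s₂, (r.image f ⊆ s.image f ↔ r ⊆ s) := fun r hr => by
    rw [← Finset.coe_subset, Finset.coe_image, Finset.coe_image,
      hf.image_subset_image_iff (hcoe r hr) (hcoe s hsub), Finset.coe_subset]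
  have hdisj : Disjoint (s₁.image f) (s₂.image f) := by
    rw [← Finset.disjoint_coe, Finset.coe_image, Finset.coe_image]
    exact (Finset.disjoint_coe.2 hs).image hf (hcoe _ Finset.subset_union_left)
      (hcoe _ Finset.subset_union_right)
  rw [mem_boundaryJoinFaces_iff hdisj, mem_boundaryJoinFaces_iff hs, Finset.image_nonempty,
    ← Finset.image_union, himage s₁ Finset.subset_union_left, himage s₂ Finset.subset_union_right]
  simp only [Finset.image_subset_image hsub, hsub, true_and]

theorem isIso_of_injOn {K : SimplicialComplex ℝ (Spc m)} {L : SimplicialComplex ℝ (Spc n)}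
    {s₁ s₂ : Finset (Spc m)} {f : Spc m → Spc n} (hs : Disjoint s₁ s₂)
    (hf : Set.InjOn f ↑(s₁ ∪ s₂)) (hK : K.faces = boundaryJoinFaces s₁ s₂)
    (hL : L.faces = boundaryJoinFaces (s₁.image f) (s₂.image f)) : IsIso K L := by
  have hsub : ∀ s ∈ K.faces, s ⊆ s₁ ∪ s₂ := fun s hs' =>
    subset_union_of_mem_boundaryJoinFaces (hK ▸ hs')
  refine ⟨f, hf.mono fun v hv => Finset.coe_subset.2 (hsub _ hv) (Finset.mem_singleton_self v),
    fun s hs' => hL ▸ (image_mem_boundaryJoinFaces_iff hs hf (hsub s hs')).2 (hK ▸ hs'),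
    fun t ht => ?_⟩
  have htsub : t ⊆ (s₁ ∪ s₂).image f := by
    rw [Finset.image_union]
    exact subset_union_of_mem_boundaryJoinFaces (hL ▸ ht)
  obtain ⟨s, hs', rfl⟩ := Finset.subset_image_iff.1 htsub
  exact ⟨s, hK ▸ (image_mem_boundaryJoinFaces_iff hs hf hs').1 (hL ▸ ht), rfl⟩

theorem isPolytopalSphere_of_faces_eq_boundaryJoinFaces {d c : ℕ} (hc : c < d)
    {M : SimplicialComplex ℝ (Spc N)} {s₁ s₂ : Finset (Spc N)} (hs : Disjoint s₁ s₂)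
    (h₁ : s₁.card = c + 2) (h₂ : s₂.card = d - c + 1) (hM : M.faces = boundaryJoinFaces s₁ s₂) :
    IsPolytopalSphere d M := by
  obtain ⟨I, -, hI⟩ := Finset.exists_subset_card_eq
    (show c + 1 ≤ (Finset.univ : Finset (Fin (d + 1))).card by simp; omega)
  have hIne : I.Nonempty := Finset.card_pos.1 (by omega)
  have hfree := isFreeSumOfSimplices_centredSimplex hIne
  obtain ⟨f, hf, hf₁, hf₂⟩ := Finset.exists_injOn_image_eq_image_eq hs hfree.disjoint
    (by rw [h₁, card_centredSimplex, hI])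
    (by rw [h₂, card_centredSimplex, Finset.card_compl, hI]; simp)
  exact ⟨_, hfree.boundaryComplex, affineSpan_centredSimplex_union_compl hIne,
    hfree.isBoundaryComplexOfPolytope, isIso_of_injOn hs hf hM (by rw [hf₁, hf₂]; rfl)⟩

/-- A `d`-pseudomanifold with `d+3` vertices is the join of two standard spheres
`S^c_{c+2} * S^{d-c-1}_{d-c+1}`, and in particular a polytopal sphere. -/
theorem pseudomanifold_d_plus_3_vertices
    {N d : ℕ} (hd : 1 ≤ d) (M : SimplicialComplex ℝ (Spc N))
    (hM : IsPseudomanifold d M) (hn : M.vertices.ncard = d + 3) :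
    (∃ c : ℕ, c < d ∧ ∃ s₁ s₂ : Finset (Spc N), Disjoint s₁ s₂ ∧
      s₁.card = c + 2 ∧ s₂.card = d - c + 1 ∧
      M.faces = {t | t ≠ ∅ ∧ ∃ α β : Finset (Spc N),
        α ⊆ s₁ ∧ α ≠ s₁ ∧ β ⊆ s₂ ∧ β ≠ s₂ ∧ t = α ∪ β}) ∧
    IsPolytopalSphere d M := by
  obtain ⟨-, ⟨-, hpure⟩, hridge, -⟩ := hM
  have hfin : M.vertices.Finite := Set.finite_of_ncard_pos (by omega)
  obtain ⟨A, B, hAB, hV, hfaces⟩ := exists_faces_eq_boundaryJoinFaces hd hfin.coe_toFinset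
    (by rw [← hn, Set.ncard_eq_toFinset_card _ hfin]) hpure hridge
  have hcard : A.card + B.card = d + 3 := by
    rw [← Finset.card_union_of_disjoint hAB, hV, ← Set.ncard_eq_toFinset_card _ hfin, hn]
  obtain ⟨hA, hB⟩ := two_le_card_of_singleton_mem_boundaryJoinFaces hAB
    (fun v hv => hfaces ▸ (hfin.mem_toFinset.1 (hV ▸ hv)))
    (Finset.card_pos.1 (by rw [Finset.card_union_of_disjoint hAB]; omega))
  exact ⟨⟨A.card - 2, by omega, A, B, hAB, by omega, by omega, hfaces⟩,
    isPolytopalSphere_of_faces_eq_boundaryJoinFaces (c := A.card - 2) (by omega) hAB (by omega)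
      (by omega) hfaces⟩

end MinTri
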